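/- Let G=(V,w,m) be a finite connected weighted graph satisfying CD(K,n) with K > 0 and n < ∞ and suppose 𝔇 < ∞. Then the combinatorial diameter satisfies diam_d(G) ≤ π√(𝔇 n/(2K)). -/

import Mathlib

open scoped ENNReal

structure WGraph (V : Type*) where
  w : V → V → ℝ
  m : V → ℝ
  symm : ∀ x y, w x y = w y x
  nonneg : ∀ x y, 0 ≤ w x y
  loopless : ∀ x, w x x = 0
  mpos : ∀ x, 0 < m x
  locfin : ∀ x, {y | w x y ≠ 0}.Finite

variable {V : Type*}

noncomputable def WGraph.lap (G : WGraph V) (f : V → ℝ) (x : V) : ℝ :=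
  (1 / G.m x) * ∑' y, G.w x y * (f y - f x)

noncomputable def WGraph.gamma (G : WGraph V) (f g : V → ℝ) (x : V) : ℝ :=
  (G.lap (f * g) x - f x * G.lap g x - g x * G.lap f x) / 2

noncomputable def WGraph.gamma2 (G : WGraph V) (f : V → ℝ) (x : V) : ℝ :=
  (G.lap (G.gamma f f) x - 2 * G.gamma f (G.lap f) x) / 2

noncomputable def WGraph.deg (G : WGraph V) (x : V) : ℝ :=
  (∑' y, G.w x y) / G.m x

noncomputable def WGraph.cdist (G : WGraph V) (x y : V) : ℕ∞ :=
  ⨅ (n : ℕ) (_ : ∃ c : ℕ → V, c 0 = x ∧ c n = y ∧ ∀ i < n, 0 < G.w (c i) (c (i+1))), (n : ℕ∞)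

noncomputable def WGraph.rho (G : WGraph V) (x y : V) : ℝ≥0∞ :=
  ⨆ (f : V → ℝ) (_ : ∀ z, G.gamma f f z ≤ 1), ENNReal.ofReal (f y - f x)

noncomputable def WGraph.diamd (G : WGraph V) : ℝ≥0∞ := ⨆ x, ⨆ y, (G.cdist x y : ℝ≥0∞)

noncomputable def WGraph.diamrho (G : WGraph V) : ℝ≥0∞ := ⨆ x, ⨆ y, G.rho x y

def WGraph.Connected (G : WGraph V) : Prop :=
  ∀ x y, ∃ (n : ℕ) (c : ℕ → V), c 0 = x ∧ c n = y ∧ ∀ i < n, 0 < G.w (c i) (c (i+1))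

/-!
Under `CD(K,n)` the heat semigroup `P_t = exp(tΔ)` satisfies the dimensional gradient estimate
`Γ(P_t f) + (1 - e^{-2Kt}) (ΔP_t f)² / (nK) ≤ e^{-2Kt} P_t Γ(f)`, obtained by differentiating
`s ↦ P_s Γ(P_{t-s} f)`. For `Γ(f) ≤ 1` it gives `Γ(P_t f) ≤ e^{-2Kt}` and
`|ΔP_t f| ≤ √(nK / (e^{2Kt} - 1))`. Integrating the second bound in `t` shows that `f` and `P_t f`
have oscillations between `x` and `y` differing by at most `π √(n/K)`, and by the first bound (along
a path from `x` to `y`) the oscillation of `P_t f` tends to `0`. Hence `diam_ρ ≤ π √(n/K)`. Finally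
`√(2/𝔇) d(x, ·)` is admissible in the definition of `ρ`, so `d ≤ √(𝔇/2) ρ`.
-/

namespace WGraph

variable (G : WGraph V)

def CD (K n : ℝ) : Prop :=
  ∀ (f : V → ℝ) (x : V), (1 / n) * (G.lap f x) ^ 2 + K * G.gamma f f x ≤ G.gamma2 f x

section CombinatorialDistance

theorem cdist_le_of_walk {x y : V} {N : ℕ} {c : ℕ → V} (h0 : c 0 = x) (hN : c N = y)
    (hc : ∀ i < N, 0 < G.w (c i) (c (i + 1))) : G.cdist x y ≤ N :=
  iInf₂_le N ⟨c, h0, hN, hc⟩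

theorem cdist_self (x : V) : G.cdist x x = 0 :=
  nonpos_iff_eq_zero.1 <|
    G.cdist_le_of_walk (c := fun _ => x) rfl rfl fun i hi => absurd hi i.not_lt_zero

theorem cdist_ne_top (hconn : G.Connected) (x y : V) : G.cdist x y ≠ ⊤ := by
  obtain ⟨N, c, h0, hN, hc⟩ := hconn x y
  exact ne_top_of_le_ne_top (ENat.natCast_ne_top N) (G.cdist_le_of_walk h0 hN hc)

theorem cdist_le_cdist_add_one (x : V) {u v : V} (huv : 0 < G.w u v) :
    G.cdist x v ≤ G.cdist x u + 1 := by
  rw [← tsub_le_iff_right]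
  refine le_iInf₂ fun N ⟨c, h0, hN, hc⟩ => tsub_le_iff_right.2 ?_
  have hwalk := G.cdist_le_of_walk (c := Function.update c (N + 1) v) (N := N + 1)
    (by rw [Function.update_of_ne (Nat.succ_ne_zero N).symm, h0]) (Function.update_self ..)
    fun i hi => by
      rcases (Nat.lt_succ_iff.1 hi).lt_or_eq with hi | rfl
      · rw [Function.update_of_ne (by omega), Function.update_of_ne (by omega)]
        exact hc i hi
      · rwa [Function.update_of_ne (by omega), Function.update_self, hN]
  exact_mod_cast hwalk

theorem abs_toNat_cdist_sub_le (hconn : G.Connected) (x : V) {u v : V} (huv : 0 < G.w u v) :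
    |((G.cdist x v).toNat : ℝ) - (G.cdist x u).toNat| ≤ 1 := by
  have hvu := G.cdist_le_cdist_add_one x huv
  have huv' := G.cdist_le_cdist_add_one x (u := v) (v := u) (by rwa [G.symm])
  lift G.cdist x u to ℕ using G.cdist_ne_top hconn x u with a
  lift G.cdist x v to ℕ using G.cdist_ne_top hconn x v with b
  simp only [ENat.toNat_natCast]
  have h1 : (b : ℝ) ≤ a + 1 := by exact_mod_cast hvu
  have h2 : (a : ℝ) ≤ b + 1 := by exact_mod_cast huv'
  exact abs_sub_le_iff.2 ⟨by linarith, by linarith⟩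

theorem ofReal_sub_le_rho {f : V → ℝ} (hf : ∀ z, G.gamma f f z ≤ 1) (x y : V) :
    ENNReal.ofReal (f y - f x) ≤ G.rho x y :=
  le_iSup₂ (f := fun (g : V → ℝ) (_ : ∀ z, G.gamma g g z ≤ 1) => ENNReal.ofReal (g y - g x))
    f hf

end CombinatorialDistance

variable [Fintype V]

section FiniteSums

theorem lap_eq_sum (f : V → ℝ) (x : V) :
    G.lap f x = (1 / G.m x) * ∑ y, G.w x y * (f y - f x) := by
  rw [lap, tsum_fintype]

theorem deg_eq_sum (x : V) : G.deg x = (∑ y, G.w x y) / G.m x := by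
  rw [deg, tsum_fintype]

theorem deg_pos_of_w_pos {u v : V} (huv : 0 < G.w u v) : 0 < G.deg u := by
  rw [deg_eq_sum]
  exact div_pos ((Finset.single_le_sum (fun y _ => G.nonneg u y) (Finset.mem_univ v)).trans_lt'
    huv) (G.mpos u)

theorem deg_nonneg (x : V) : 0 ≤ G.deg x := by
  rw [deg_eq_sum]
  exact div_nonneg (Finset.sum_nonneg fun y _ => G.nonneg x y) (G.mpos x).le

theorem gamma_eq_sum (f g : V → ℝ) (x : V) :
    G.gamma f g x = (1 / (2 * G.m x)) * ∑ y, G.w x y * ((f y - f x) * (g y - g x)) := by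
  simp only [gamma, lap_eq_sum, Pi.mul_apply, Finset.mul_sum, ← Finset.sum_sub_distrib,
    Finset.sum_div]
  refine Finset.sum_congr rfl fun y _ => ?_
  have := (G.mpos x).ne'
  field_simp
  ring

theorem gamma_self_eq_sum (f : V → ℝ) (x : V) :
    G.gamma f f x = (1 / (2 * G.m x)) * ∑ y, G.w x y * (f y - f x) ^ 2 := by
  simp only [gamma_eq_sum, sq]

theorem gamma_self_nonneg (f : V → ℝ) (x : V) : 0 ≤ G.gamma f f x := by
  rw [gamma_self_eq_sum]
  have := G.mpos x
  exact mul_nonneg (by positivity)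
    (Finset.sum_nonneg fun y _ => mul_nonneg (G.nonneg x y) (sq_nonneg _))

theorem gamma_smul_self (a : ℝ) (f : V → ℝ) (x : V) :
    G.gamma (a • f) (a • f) x = a ^ 2 * G.gamma f f x := by
  simp only [gamma_self_eq_sum, Pi.smul_apply, smul_eq_mul, Finset.mul_sum]
  exact Finset.sum_congr rfl fun y _ => by ring

theorem gamma_neg_right (f g : V → ℝ) : G.gamma f (-g) = -G.gamma f g := by
  ext x
  simp only [gamma_eq_sum, Pi.neg_apply, ← Finset.sum_neg_distrib, Finset.mul_sum]
  exact Finset.sum_congr rfl fun y _ => by ring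

theorem sq_sub_le_of_gamma_le_one {f : V → ℝ} (hf : ∀ z, G.gamma f f z ≤ 1) {u v : V}
    (huv : 0 < G.w u v) : (f v - f u) ^ 2 ≤ 2 * G.m u / G.w u v := by
  have hm := G.mpos u
  have hsum : ∑ y, G.w u y * (f y - f u) ^ 2 ≤ 2 * G.m u := by
    have := hf u
    rw [gamma_self_eq_sum, one_div, inv_mul_le_iff₀ (by positivity), mul_one] at this
    exact this
  have hterm : G.w u v * (f v - f u) ^ 2 ≤ ∑ y, G.w u y * (f y - f u) ^ 2 :=
    Finset.single_le_sum (f := fun y => G.w u y * (f y - f u) ^ 2)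
      (fun y _ => mul_nonneg (G.nonneg u y) (sq_nonneg _)) (Finset.mem_univ v)
  rw [le_div_iff₀ huv, mul_comm]
  exact hterm.trans hsum

theorem gamma_self_le_deg_div_two {f : V → ℝ}
    (hf : ∀ u v, 0 < G.w u v → |f v - f u| ≤ 1) (x : V) : G.gamma f f x ≤ G.deg x / 2 := by
  have hterm : ∀ y, G.w x y * (f y - f x) ^ 2 ≤ G.w x y := fun y => by
    rcases (G.nonneg x y).lt_or_eq with hw | hw
    · exact mul_le_of_le_one_right hw.le (sq_le_one_iff_abs_le_one _ |>.2 (hf x y hw))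
    · simp [← hw]
  rw [gamma_self_eq_sum, deg_eq_sum]
  have := G.mpos x
  calc 1 / (2 * G.m x) * ∑ y, G.w x y * (f y - f x) ^ 2
      ≤ 1 / (2 * G.m x) * ∑ y, G.w x y := by gcongr with y; exact hterm y
    _ = (∑ y, G.w x y) / G.m x / 2 := by field_simp

end FiniteSums

section HeatSemigroup

noncomputable def lapCLM : (V → ℝ) →L[ℝ] (V → ℝ) :=
  LinearMap.toContinuousLinearMap
    { toFun := G.lap
      map_add' := fun f g => by
        ext x
        simp only [lap_eq_sum, Pi.add_apply, ← mul_add, ← Finset.sum_add_distrib]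
        exact congrArg _ (Finset.sum_congr rfl fun y _ => by ring)
      map_smul' := fun a f => by
        ext x
        simp only [lap_eq_sum, Pi.smul_apply, smul_eq_mul, RingHom.id_apply, Finset.mul_sum]
        exact Finset.sum_congr rfl fun y _ => by ring }

@[simp] theorem lapCLM_apply (f : V → ℝ) : G.lapCLM f = G.lap f := rfl

noncomputable def heat (t : ℝ) : (V → ℝ) →L[ℝ] (V → ℝ) :=
  NormedSpace.exp (t • G.lapCLM)

theorem heat_zero : G.heat 0 = 1 := by simp [heat]

theorem exp_add_of_commute_clm {A B : (V → ℝ) →L[ℝ] (V → ℝ)} (h : Commute A B) :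
    NormedSpace.exp (A + B) = NormedSpace.exp A * NormedSpace.exp B := by
  have hball : ∀ C : (V → ℝ) →L[ℝ] (V → ℝ),
      C ∈ Metric.eball 0 (NormedSpace.expSeries ℝ ((V → ℝ) →L[ℝ] (V → ℝ))).radius :=
    fun C => (NormedSpace.expSeries_radius_eq_top ℝ ((V → ℝ) →L[ℝ] (V → ℝ))).symm ▸
      edist_lt_top _ _
  exact NormedSpace.exp_add_of_commute_of_mem_ball h (hball A) (hball B)

theorem heat_add (s t : ℝ) : G.heat (s + t) = G.heat s * G.heat t := by
  rw [heat, add_smul]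
  exact exp_add_of_commute_clm (((Commute.refl _).smul_left s).smul_right t)

theorem heat_lap (t : ℝ) (f : V → ℝ) : G.heat t (G.lap f) = G.lap (G.heat t f) :=
  congrArg (· f) (((Commute.refl G.lapCLM).smul_left t).exp_left).eq

theorem hasDerivAt_heat (t : ℝ) : HasDerivAt G.heat (G.lapCLM * G.heat t) t :=
  hasDerivAt_exp_smul_const' G.lapCLM t

theorem hasDerivAt_heat_apply (f : V → ℝ) (t : ℝ) :
    HasDerivAt (fun s => G.heat s f) (G.lap (G.heat t f)) t := by
  simpa using (G.hasDerivAt_heat t).clm_apply (hasDerivAt_const t f)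

theorem heat_one (t : ℝ) : G.heat t 1 = 1 := by
  have hconst := is_const_of_deriv_eq_zero (f := fun s => G.heat s 1)
    (fun s => (G.hasDerivAt_heat_apply 1 s).differentiableAt)
    (fun s => by
      rw [(G.hasDerivAt_heat_apply 1 s).deriv, ← heat_lap]
      have : G.lap 1 = 0 := by ext x; simp [lap_eq_sum]
      rw [this, map_zero])
  simpa [heat_zero] using hconst t 0

end HeatSemigroup

section Positivity

theorem lap_add_smul_nonneg {c : ℝ} (hc : ∀ x, G.deg x ≤ c) {f : V → ℝ} (hf : 0 ≤ f) :
    0 ≤ G.lap f + c • f := by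
  intro x
  have hm := G.mpos x
  have hx : (G.lap f + c • f) x = (1 / G.m x) * ∑ y, G.w x y * f y + (c - G.deg x) * f x := by
    simp only [Pi.add_apply, Pi.smul_apply, smul_eq_mul, lap_eq_sum, deg_eq_sum, mul_sub,
      Finset.sum_sub_distrib, ← Finset.sum_mul]
    field_simp
    ring
  rw [Pi.zero_apply, hx]
  have hsum : 0 ≤ ∑ y, G.w x y * f y :=
    Finset.sum_nonneg fun y _ => mul_nonneg (G.nonneg x y) (hf y)
  exact add_nonneg (mul_nonneg (by positivity) hsum) (mul_nonneg (sub_nonneg.2 (hc x)) (hf x))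

/-- Writing `Δ = Q - c` with `Q = Δ + c` positive (`c` bounding the degrees),
`P_t = e^{-tc} exp(tQ)` is a series of positive operators. -/
theorem heat_nonneg {t : ℝ} (ht : 0 ≤ t) {f : V → ℝ} (hf : 0 ≤ f) : 0 ≤ G.heat t f := by
  set c := ∑ z, G.deg z
  have hc : ∀ x, G.deg x ≤ c := fun x =>
    Finset.single_le_sum (fun z _ => G.deg_nonneg z) (Finset.mem_univ x)
  set Q : (V → ℝ) →L[ℝ] (V → ℝ) := G.lapCLM + c • 1
  have hQ : ∀ k (g : V → ℝ), 0 ≤ g → 0 ≤ (Q ^ k) g := by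
    intro k
    induction k with
    | zero => simp
    | succ k ih => exact fun g hg => ih (Q g) (G.lap_add_smul_nonneg hc hg)
  have hsplit : G.heat t = Real.exp (-(t * c)) • NormedSpace.exp (t • Q) := by
    have hdecomp : t • G.lapCLM = algebraMap ℝ _ (-(t * c)) + t • Q := by
      simp only [Q, Algebra.algebraMap_eq_smul_one, smul_add, smul_smul]
      module
    rw [heat, hdecomp, exp_add_of_commute_clm (Algebra.commute_algebraMap_left _ _),
      ← NormedSpace.algebraMap_exp_comm, ← Real.exp_eq_exp_ℝ, ← Algebra.smul_def]
  rw [hsplit, smul_apply]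
  refine smul_nonneg (Real.exp_pos _).le (HasSum.nonneg (fun k => ?_)
    ((NormedSpace.exp_series_hasSum_exp' (𝕂 := ℝ) (t • Q)).mapL
      (ContinuousLinearMap.apply ℝ (V → ℝ) f)))
  simp only [ContinuousLinearMap.apply_apply, smul_apply, smul_pow]
  exact smul_nonneg (by positivity) (smul_nonneg (pow_nonneg ht k) (hQ k f hf))

theorem heat_mono {t : ℝ} (ht : 0 ≤ t) {f g : V → ℝ} (hfg : f ≤ g) :
    G.heat t f ≤ G.heat t g := by
  simpa using G.heat_nonneg ht (sub_nonneg.2 hfg)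

theorem heat_le_one {t : ℝ} (ht : 0 ≤ t) {f : V → ℝ} (hf : f ≤ 1) : G.heat t f ≤ 1 :=
  G.heat_one t ▸ G.heat_mono ht hf

theorem sq_heat_le_heat_sq {t : ℝ} (ht : 0 ≤ t) (f : V → ℝ) (x : V) :
    G.heat t f x ^ 2 ≤ G.heat t (f ^ 2) x := by
  set a := G.heat t f x
  have hsq : (f - a • 1) ^ 2 = f ^ 2 - (2 * a) • f + a ^ 2 • 1 := by
    ext z
    simp only [Pi.pow_apply, Pi.sub_apply, Pi.add_apply, Pi.smul_apply, Pi.one_apply, smul_eq_mul]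
    ring
  have hpos := G.heat_nonneg ht (f := (f - a • 1) ^ 2) (fun z => sq_nonneg ((f - a • 1) z)) x
  rw [hsq, map_add, map_sub, map_smul, map_smul, heat_one] at hpos
  simp only [Pi.add_apply, Pi.sub_apply, Pi.smul_apply, Pi.one_apply, Pi.zero_apply,
    smul_eq_mul] at hpos
  nlinarith

end Positivity

section GradientEstimates

theorem hasDerivAt_gamma_self {u : ℝ → V → ℝ} {u' : V → ℝ} {t : ℝ}
    (hu : HasDerivAt u u' t) :
    HasDerivAt (fun s => G.gamma (u s) (u s)) ((2 : ℝ) • G.gamma (u t) u') t := by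
  refine hasDerivAt_pi.2 fun x => ?_
  simp only [gamma_self_eq_sum]
  have hsum := HasDerivAt.fun_sum (u := Finset.univ) fun y _ =>
    (((hasDerivAt_pi.1 hu y).sub (hasDerivAt_pi.1 hu x)).pow 2).const_mul (G.w x y)
  refine (hsum.const_mul (1 / (2 * G.m x))).congr_deriv ?_
  simp only [Pi.smul_apply, smul_eq_mul, gamma_eq_sum, Finset.mul_sum]
  exact Finset.sum_congr rfl fun y _ => by simp only [Pi.sub_apply]; push_cast; ring

theorem hasDerivAt_heat_gamma_heat (f : V → ℝ) (T t : ℝ) :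
    HasDerivAt (fun s => G.heat s (G.gamma (G.heat (T - s) f) (G.heat (T - s) f)))
      (G.heat t ((2 : ℝ) • G.gamma2 (G.heat (T - t) f))) t := by
  set g := G.heat (T - t) f
  have hg : HasDerivAt (fun s => G.heat (T - s) f) (-G.lap g) t := by
    simpa [Function.comp_def] using
      (G.hasDerivAt_heat_apply f (T - t)).scomp t ((hasDerivAt_id t).const_sub T)
  refine ((G.hasDerivAt_heat t).clm_apply (G.hasDerivAt_gamma_self hg)).congr_deriv ?_
  rw [mul_apply_eq_comp, lapCLM_apply, ← heat_lap, ← map_add, gamma_neg_right]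
  congr 1
  ext x
  simp only [Pi.add_apply, Pi.smul_apply, Pi.neg_apply, smul_eq_mul, gamma2]
  ring

theorem heat_gamma2_ge {K n : ℝ} (hCD : G.CD K n) (hn : 0 < n) {t : ℝ} (ht : 0 ≤ t)
    (g : V → ℝ) (x : V) :
    2 * K * G.heat t (G.gamma g g) x + 2 / n * G.lap (G.heat t g) x ^ 2
      ≤ G.heat t ((2 : ℝ) • G.gamma2 g) x := by
  have hpoint : (2 / n) • G.lap g ^ 2 + (2 * K) • G.gamma g g ≤ (2 : ℝ) • G.gamma2 g :=
    fun z => by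
      have := hCD g z
      simp only [Pi.add_apply, Pi.smul_apply, Pi.pow_apply, smul_eq_mul]
      linarith [show 2 / n * G.lap g z ^ 2 = 2 * (1 / n * G.lap g z ^ 2) by ring]
  have hmono := G.heat_mono ht hpoint x
  rw [map_add, map_smul, map_smul] at hmono
  simp only [Pi.add_apply, Pi.smul_apply, smul_eq_mul] at hmono
  have hjensen := G.sq_heat_le_heat_sq ht (G.lap g) x
  rw [heat_lap] at hjensen
  have := mul_le_mul_of_nonneg_left hjensen (by positivity : (0 : ℝ) ≤ 2 / n)
  linarith

/-- Dimensional Bakry–Ledoux estimate: `ψ(s) = e^{-2Ks} (P_s Γ(P_{T-s} f) + C/(nK))` is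
nondecreasing in `s`, where `C = (Δ P_T f)²(x)` is fixed at time `T`. -/
theorem gamma_heat_add_le {K n : ℝ} (hCD : G.CD K n) (hK : 0 < K) (hn : 0 < n) {T : ℝ}
    (hT : 0 ≤ T) (f : V → ℝ) (x : V) :
    G.gamma (G.heat T f) (G.heat T f) x + G.lap (G.heat T f) x ^ 2 / (n * K)
      ≤ Real.exp (-(2 * K * T)) *
        (G.heat T (G.gamma f f) x + G.lap (G.heat T f) x ^ 2 / (n * K)) := by
  set C := G.lap (G.heat T f) x ^ 2
  set Φ := fun s => G.heat s (G.gamma (G.heat (T - s) f) (G.heat (T - s) f)) x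
  set Φ' := fun s => G.heat s ((2 : ℝ) • G.gamma2 (G.heat (T - s) f)) x
  set ψ := fun s => Real.exp (-(2 * K * s)) * (Φ s + C / (n * K))
  have hψ : ∀ t,
      HasDerivAt ψ (Real.exp (-(2 * K * t)) * (Φ' t - 2 * K * Φ t - 2 / n * C)) t := by
    intro t
    have hexp : HasDerivAt (fun s => Real.exp (-(2 * K * s)))
        (Real.exp (-(2 * K * t)) * -(2 * K)) t :=
      (((hasDerivAt_id t).const_mul (2 * K)).neg.congr_deriv (by ring)).exp
    refine (hexp.mul ((hasDerivAt_pi.1 (G.hasDerivAt_heat_gamma_heat f T t) x).add_const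
      (C / (n * K)))).congr_deriv ?_
    field_simp
    ring
  have hmono : MonotoneOn ψ (Set.Icc 0 T) := by
    refine monotoneOn_of_hasDerivWithinAt_nonneg (convex_Icc 0 T)
      (fun t _ => (hψ t).continuousAt.continuousWithinAt)
      (fun t _ => (hψ t).hasDerivWithinAt) fun t ht => ?_
    rw [interior_Icc] at ht
    have hlow := G.heat_gamma2_ge hCD hn ht.1.le (G.heat (T - t) f) x
    rw [← mul_apply_eq_comp, ← heat_add, add_sub_cancel] at hlow
    exact mul_nonneg (Real.exp_pos _).le (by simp only [Φ, Φ']; linarith)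
  have h0T := hmono (Set.left_mem_Icc.2 hT) (Set.right_mem_Icc.2 hT) hT
  simpa [ψ, Φ, heat_zero] using h0T

theorem gamma_heat_le {K n : ℝ} (hCD : G.CD K n) (hK : 0 < K) (hn : 0 < n) {f : V → ℝ}
    (hf : ∀ z, G.gamma f f z ≤ 1) {T : ℝ} (hT : 0 ≤ T) (x : V) :
    G.gamma (G.heat T f) (G.heat T f) x ≤ Real.exp (-(2 * K * T)) := by
  have hmain := G.gamma_heat_add_le hCD hK hn hT f x
  have hP : G.heat T (G.gamma f f) x ≤ 1 := G.heat_le_one hT hf x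
  have he : Real.exp (-(2 * K * T)) ≤ 1 := Real.exp_le_one_iff.2 (by nlinarith)
  have hc : 0 ≤ G.lap (G.heat T f) x ^ 2 / (n * K) := by positivity
  nlinarith [Real.exp_pos (-(2 * K * T))]

theorem sq_lap_heat_mul_le {K n : ℝ} (hCD : G.CD K n) (hK : 0 < K) (hn : 0 < n) {f : V → ℝ}
    (hf : ∀ z, G.gamma f f z ≤ 1) {T : ℝ} (hT : 0 ≤ T) (x : V) :
    G.lap (G.heat T f) x ^ 2 * (Real.exp (2 * K * T) - 1) ≤ n * K := by
  set c := G.lap (G.heat T f) x ^ 2 / (n * K)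
  set e := Real.exp (-(2 * K * T))
  have hmain := G.gamma_heat_add_le hCD hK hn hT f x
  have hP : G.heat T (G.gamma f f) x ≤ 1 := G.heat_le_one hT hf x
  have hA := G.gamma_self_nonneg (G.heat T f) x
  have he : 0 < e := Real.exp_pos _
  have hc : c * (1 - e) ≤ e := by nlinarith
  have hEe : Real.exp (2 * K * T) * e = 1 := by rw [← Real.exp_add]; simp
  have hnK : 0 < n * K := by positivity
  have hE1 : Real.exp (2 * K * T) * (1 - e) = Real.exp (2 * K * T) - 1 := by
    rw [mul_sub, hEe, mul_one]
  calc G.lap (G.heat T f) x ^ 2 * (Real.exp (2 * K * T) - 1)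
      = n * K * (c * (Real.exp (2 * K * T) * (1 - e))) := by
        rw [hE1, ← mul_assoc, mul_div_cancel₀ _ hnK.ne']
    _ = n * K * (Real.exp (2 * K * T) * (c * (1 - e))) := by ring
    _ ≤ n * K * (Real.exp (2 * K * T) * e) := by gcongr
    _ = n * K := by rw [hEe, mul_one]

end GradientEstimates

section Oscillation

theorem abs_lap_heat_le {K n : ℝ} (hCD : G.CD K n) (hK : 0 < K) (hn : 0 < n) {f : V → ℝ}
    (hf : ∀ z, G.gamma f f z ≤ 1) {t : ℝ} (ht : 0 < t) (x : V) :
    |G.lap (G.heat t f) x| ≤ √(n / K) * K / √(Real.exp (2 * K * t) - 1) := by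
  have hE : 0 < Real.exp (2 * K * t) - 1 := by
    rw [sub_pos, Real.one_lt_exp_iff]; positivity
  have hnK : (√(n / K) * K) ^ 2 = n * K := by
    rw [mul_pow, Real.sq_sqrt (by positivity)]; field_simp
  rw [le_div_iff₀ (Real.sqrt_pos.2 hE)]
  refine (pow_le_pow_iff_left₀ (by positivity) (by positivity) two_ne_zero).1 ?_
  rw [mul_pow, sq_abs, Real.sq_sqrt hE.le, hnK]
  exact G.sq_lap_heat_mul_le hCD hK hn hf ht.le x

theorem hasDerivAt_arctan_sqrt_exp_sub_one {K t : ℝ} (hK : 0 < K) (ht : 0 < t) :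
    HasDerivAt (fun s => Real.arctan √(Real.exp (2 * K * s) - 1))
      (K / √(Real.exp (2 * K * t) - 1)) t := by
  have hE : 0 < Real.exp (2 * K * t) - 1 := by
    rw [sub_pos, Real.one_lt_exp_iff]; positivity
  have hexp : HasDerivAt (fun s => Real.exp (2 * K * s) - 1)
      (Real.exp (2 * K * t) * (2 * K)) t :=
    (((hasDerivAt_id t).const_mul (2 * K)).congr_deriv (mul_one _)).exp.sub_const 1
  refine ((hexp.sqrt hE.ne').arctan).congr_deriv ?_
  have hs : 0 < √(Real.exp (2 * K * t) - 1) := Real.sqrt_pos.2 hE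
  rw [Real.sq_sqrt hE.le]
  field_simp
  ring

/-- `2 √(n/K) arctan √(e^{2Kt} - 1)` is an antiderivative of the bound `abs_lap_heat_le` on
`|Δ P_t f|`, and it stays below `π √(n/K)`. -/
theorem sub_le_heat_sub_add {K n : ℝ} (hCD : G.CD K n) (hK : 0 < K) (hn : 0 < n) {f : V → ℝ}
    (hf : ∀ z, G.gamma f f z ≤ 1) {T : ℝ} (hT : 0 ≤ T) (x y : V) :
    f y - f x ≤ G.heat T f y - G.heat T f x + Real.pi * √(n / K) := by
  set κ := √(n / K)
  set H := fun t =>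
    G.heat t f y - G.heat t f x + 2 * κ * Real.arctan √(Real.exp (2 * K * t) - 1)
  have hheat : ∀ z t, HasDerivAt (fun s => G.heat s f z) (G.lap (G.heat t f) z) t :=
    fun z t => hasDerivAt_pi.1 (G.hasDerivAt_heat_apply f t) z
  have hcont : Continuous H := by
    have hheat_cont : ∀ z, Continuous fun s => G.heat s f z :=
      fun z => continuous_iff_continuousAt.2 fun t => (hheat z t).continuousAt
    exact ((hheat_cont y).sub (hheat_cont x)).add (continuous_const.mul
      (Real.continuous_arctan.comp (by fun_prop)))
  have hmono : MonotoneOn H (Set.Icc 0 T) := by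
    refine monotoneOn_of_hasDerivWithinAt_nonneg (convex_Icc 0 T) hcont.continuousOn
      (f' := fun t => G.lap (G.heat t f) y - G.lap (G.heat t f) x
        + 2 * κ * (K / √(Real.exp (2 * K * t) - 1))) (fun t ht => ?_) (fun t ht => ?_)
    all_goals rw [interior_Icc] at ht
    · exact (((hheat y t).sub (hheat x t)).add
        ((hasDerivAt_arctan_sqrt_exp_sub_one hK ht.1).const_mul (2 * κ))).hasDerivWithinAt
    · have hy := abs_le.1 (G.abs_lap_heat_le hCD hK hn hf ht.1 y)
      have hx := abs_le.1 (G.abs_lap_heat_le hCD hK hn hf ht.1 x)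
      have : 2 * κ * (K / √(Real.exp (2 * K * t) - 1))
          = 2 * (κ * K / √(Real.exp (2 * K * t) - 1)) := by ring
      linarith
  have h0T := hmono (Set.left_mem_Icc.2 hT) (Set.right_mem_Icc.2 hT) hT
  have harctan := Real.arctan_lt_pi_div_two √(Real.exp (2 * K * T) - 1)
  simp only [H, heat_zero, mul_zero, Real.exp_zero, sub_self, Real.sqrt_zero, Real.arctan_zero,
    add_zero, one_apply_eq_self] at h0T
  nlinarith [Real.sqrt_nonneg (n / K)]

end Oscillation

section Diameter

theorem exists_forall_sub_le_of_gamma_le_one (hconn : G.Connected) (x y : V) :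
    ∃ B, ∀ f : V → ℝ, (∀ z, G.gamma f f z ≤ 1) → f y - f x ≤ B := by
  obtain ⟨N, c, hc0, hcN, hedge⟩ := hconn x y
  refine ⟨∑ i ∈ Finset.range N, √(2 * G.m (c i) / G.w (c i) (c (i + 1))), fun f hf => ?_⟩
  rw [← hc0, ← hcN, ← Finset.sum_range_sub (fun i => f (c i))]
  refine Finset.sum_le_sum fun i hi => ?_
  exact Real.le_sqrt_of_sq_le
    (G.sq_sub_le_of_gamma_le_one hf (hedge i (Finset.mem_range.1 hi)))

theorem sub_le_of_CD (hconn : G.Connected) {K n : ℝ} (hCD : G.CD K n) (hK : 0 < K) (hn : 0 < n)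
    {f : V → ℝ} (hf : ∀ z, G.gamma f f z ≤ 1) (x y : V) :
    f y - f x ≤ Real.pi * √(n / K) := by
  obtain ⟨B, hB⟩ := G.exists_forall_sub_le_of_gamma_le_one hconn x y
  have hbound : ∀ T, 0 ≤ T → f y - f x ≤ Real.pi * √(n / K) + Real.exp (-(K * T)) * B := by
    intro T hT
    have hgamma : ∀ z, G.gamma (Real.exp (K * T) • G.heat T f)
        (Real.exp (K * T) • G.heat T f) z ≤ 1 := by
      intro z
      rw [gamma_smul_self]
      calc Real.exp (K * T) ^ 2 * G.gamma (G.heat T f) (G.heat T f) z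
          ≤ Real.exp (K * T) ^ 2 * Real.exp (-(2 * K * T)) := by
            gcongr; exact G.gamma_heat_le hCD hK hn hf hT z
        _ = 1 := by
          rw [← Real.exp_nat_mul, ← Real.exp_add, Real.exp_eq_one_iff]; push_cast; ring
    have hrescaled := hB _ hgamma
    simp only [Pi.smul_apply, smul_eq_mul, ← mul_sub] at hrescaled
    have hheat : G.heat T f y - G.heat T f x ≤ Real.exp (-(K * T)) * B :=
      calc G.heat T f y - G.heat T f x
          = Real.exp (-(K * T)) * (Real.exp (K * T) * (G.heat T f y - G.heat T f x)) := by
            rw [← mul_assoc, ← Real.exp_add, neg_add_cancel, Real.exp_zero, one_mul]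
        _ ≤ Real.exp (-(K * T)) * B := by gcongr
    linarith [G.sub_le_heat_sub_add hCD hK hn hf hT x y]
  have hlim : Filter.Tendsto (fun T => Real.pi * √(n / K) + Real.exp (-(K * T)) * B)
      Filter.atTop (nhds (Real.pi * √(n / K))) := by
    have := (Real.tendsto_exp_neg_atTop_nhds_zero.comp
      (Filter.tendsto_id.const_mul_atTop hK)).mul_const B
    simpa [Function.comp_def] using this.const_add (Real.pi * √(n / K))
  exact ge_of_tendsto hlim ((Filter.eventually_ge_atTop 0).mono hbound)

theorem cdist_le_mul_rho (hconn : G.Connected) {D : ℝ} (hD : ∀ z, G.deg z ≤ D) (x y : V) :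
    (G.cdist x y : ℝ≥0∞) ≤ ENNReal.ofReal √(D / 2) * G.rho x y := by
  rcases le_or_gt D 0 with hD0 | hD0
  · obtain ⟨N, c, h0, hN, hc⟩ := hconn x y
    cases N with
    | zero => simp [nonpos_iff_eq_zero.1 (G.cdist_le_of_walk h0 hN hc)]
    | succ N =>
      exact absurd ((G.deg_pos_of_w_pos (hc 0 N.succ_pos)).trans_le (hD _)) hD0.not_gt
  · set d : V → ℝ := fun z => (G.cdist x z).toNat
    set f := √(2 / D) • d
    have hf : ∀ z, G.gamma f f z ≤ 1 := by
      intro z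
      have hd := G.gamma_self_le_deg_div_two (fun _ _ h => G.abs_toNat_cdist_sub_le hconn x h) z
      rw [gamma_smul_self, Real.sq_sqrt (by positivity)]
      calc 2 / D * G.gamma d d z ≤ 2 / D * (D / 2) := by gcongr; linarith [hD z]
        _ = 1 := by field_simp
    have hfxy : √(D / 2) * (f y - f x) = (G.cdist x y).toNat := by
      simp only [f, d, Pi.smul_apply, smul_eq_mul, cdist_self, ENat.toNat_zero, Nat.cast_zero,
        mul_zero, sub_zero, ← mul_assoc, ← Real.sqrt_mul (by positivity : 0 ≤ D / 2)]
      rw [show D / 2 * (2 / D) = 1 by field_simp, Real.sqrt_one, one_mul]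
    lift G.cdist x y to ℕ using G.cdist_ne_top hconn x y with k
    calc ((k : ℕ∞) : ℝ≥0∞) = ENNReal.ofReal (√(D / 2) * (f y - f x)) := by
          rw [hfxy, ENat.toNat_natCast, ENNReal.ofReal_natCast, ENat.toENNReal_coe]
      _ = ENNReal.ofReal √(D / 2) * ENNReal.ofReal (f y - f x) :=
        ENNReal.ofReal_mul (Real.sqrt_nonneg _)
      _ ≤ ENNReal.ofReal √(D / 2) * G.rho x y := by gcongr; exact G.ofReal_sub_le_rho hf x y

theorem diamd_le_mul_diamrho (hconn : G.Connected) {D : ℝ} (hD : ∀ z, G.deg z ≤ D) :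
    G.diamd ≤ ENNReal.ofReal √(D / 2) * G.diamrho :=
  iSup₂_le fun x y => (G.cdist_le_mul_rho hconn hD x y).trans
    (by gcongr; exact le_iSup₂ (f := fun x y => G.rho x y) x y)

theorem diamrho_le_of_CD (hconn : G.Connected) {K n : ℝ} (hCD : G.CD K n) (hK : 0 < K)
    (hn : 0 < n) : G.diamrho ≤ ENNReal.ofReal (Real.pi * √(n / K)) :=
  iSup₂_le fun x y => iSup₂_le fun _ hf =>
    ENNReal.ofReal_le_ofReal (G.sub_le_of_CD hconn hCD hK hn hf x y)

end Diameter

end WGraph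

theorem diamd_le_of_CDn_general (G : WGraph V) [Fintype V]
    (hconn : G.Connected) (K n D : ℝ) (hK : 0 < K) (hn : 0 < n)
    (hD : IsLUB (Set.range G.deg) D)
    (hCD : ∀ (f : V → ℝ) (x : V),
      (1 / n) * (G.lap f x) ^ 2 + K * G.gamma f f x ≤ G.gamma2 f x) :
    G.diamd ≤ ENNReal.ofReal (Real.pi * Real.sqrt (D * n / (2 * K))) := by
  have hdeg : ∀ z, G.deg z ≤ D := fun z => hD.1 ⟨z, rfl⟩
  calc G.diamd ≤ ENNReal.ofReal √(D / 2) * G.diamrho := G.diamd_le_mul_diamrho hconn hdeg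
    _ ≤ ENNReal.ofReal √(D / 2) * ENNReal.ofReal (Real.pi * √(n / K)) := by
      gcongr; exact G.diamrho_le_of_CD hconn hCD hK hn
    _ = ENNReal.ofReal (Real.pi * √(D * n / (2 * K))) := by
      rw [← ENNReal.ofReal_mul (Real.sqrt_nonneg _), mul_left_comm,
        ← Real.sqrt_mul' _ (by positivity)]
      congr 3
      ring

/-- finite connected graph, CD(K,n), K>0, n<∞ ⟹ diam_d ≤ π√(𝔇n/(2K)). -/
theorem diamd_le_of_CDn (G : WGraph V) [Fintype V] [Nonempty V]
    (hconn : G.Connected) (K n D : ℝ) (hK : 0 < K) (hn : 0 < n)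
    (hD : IsLUB (Set.range G.deg) D)
    (hCD : ∀ (f : V → ℝ) (x : V),
      (1 / n) * (G.lap f x) ^ 2 + K * G.gamma f f x ≤ G.gamma2 f x) :
    G.diamd ≤ ENNReal.ofReal (Real.pi * Real.sqrt (D * n / (2 * K))) :=
  diamd_le_of_CDn_general G hconn K n D hK hn hD hCD
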